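/- Let n ≥ 5 be odd. Let T be the caterpillar with internal nodes x_1,...,x_{n-1}, y, where edges (x_i,x_{i+1}) for 1 ≤ i < ⌊n/2⌋ and ⌈n/2⌉ ≤ i < n−1 have weight 2, leaves v_i, u_i are attached to x_i with weight-n edges (1 ≤ i ≤ n−1), and y is connected to x_{⌊n/2⌋}, x_{⌈n/2⌉}, and leaf v_n each with weight-1 edges. Then PCG(T, 2n−2, 2n+2) equals the graph C_n ⊠ P_2 with the vertex u_n removed. -/

import Mathlib

open SimpleGraph

/-- A tree with positive real edge weights. -/
structure WTree (α : Type) where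
  g : SimpleGraph α
  isTree : g.IsTree
  w : α → α → ℝ
  w_symm : ∀ a b, w a b = w b a
  w_pos : ∀ a b, g.Adj a b → 0 < w a b

/-- The weighted distance between two vertices of a weighted tree: the sum of
the weights of the edges on the unique path between them. -/
noncomputable def WTree.dist {α : Type} (T : WTree α) (u v : α) : ℝ :=
  (((T.isTree.existsUnique_path u v).exists.choose).darts.map
    (fun d => T.w d.toProd.1 d.toProd.2)).sum

/-- A vertex of a weighted tree is a leaf if it has exactly one neighbor. -/
def WTree.IsLeaf {α : Type} (T : WTree α) (v : α) : Prop :=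
  ∃! u, T.g.Adj v u

/-- `G = PCG(T, dmin, dmax)` via the leaf-assignment `f`. -/
def IsPCGWith {V β : Type} (G : SimpleGraph V) (T : WTree β) (f : V → β)
    (dmin dmax : ℝ) : Prop :=
  Function.Injective f ∧ (∀ v, T.IsLeaf (f v)) ∧ (∀ b, T.IsLeaf b → ∃ v, f v = b) ∧
    ∀ u v : V, u ≠ v →
      (G.Adj u v ↔ dmin ≤ T.dist (f u) (f v) ∧ T.dist (f u) (f v) ≤ dmax)

/-- A graph is a pairwise compatibility graph. -/
def IsPCG {V : Type} (G : SimpleGraph V) : Prop :=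
  ∃ (β : Type) (T : WTree β) (f : V → β) (dmin dmax : ℝ),
    0 ≤ dmin ∧ dmin ≤ dmax ∧ IsPCGWith G T f dmin dmax

/-- The strong product `C_n ⊠ P_2`: vertices `(i, s)` with `s : Fin 2`
(`u_i = (i, 0)`, `v_i = (i, 1)`), adjacent iff distinct and the first
coordinates are equal or consecutive modulo `n`. -/
def strongProdC2 (n : ℕ) : SimpleGraph (Fin n × Fin 2) where
  Adj x y := x ≠ y ∧ (x.1 = y.1 ∨ (x.1.val + 1) % n = y.1.val ∨
    (y.1.val + 1) % n = x.1.val)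
  symm := by
    constructor
    rintro x y ⟨hne, h⟩
    refine ⟨hne.symm, ?_⟩
    rcases h with h | h | h
    · exact Or.inl h.symm
    · exact Or.inr (Or.inr h)
    · exact Or.inr (Or.inl h)
  loopless := ⟨fun x h => h.1 rfl⟩

/-- Vertices of the caterpillar for odd `n`: internal nodes `x_{i+1} = .inl i`,
leaves `u_{i+1} = .inr (.inl i)`, `v_{i+1} = .inr (.inr (.inl i))` for
`i : Fin (n-1)`, the internal node `y = .inr (.inr (.inr (.inl ())))` and the
extra leaf `v_n = .inr (.inr (.inr (.inr ())))`. -/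
abbrev CatVO (n : ℕ) := Fin (n - 1) ⊕ (Fin (n - 1) ⊕ (Fin (n - 1) ⊕ (Unit ⊕ Unit)))

/-- Edges of the caterpillar (odd case): consecutive spine nodes except between
`x_{⌊n/2⌋}` and `x_{⌈n/2⌉}`, each `u_i` and `v_i` attached to `x_i`, and `y`
attached to `x_{⌊n/2⌋}`, `x_{⌈n/2⌉}` and `v_n`. -/
def catRelO (n : ℕ) : CatVO n → CatVO n → Prop := fun a b =>
  match a, b with
  | .inl i, .inl j => i.val + 1 = j.val ∧ j.val ≠ n / 2
  | .inr (.inl i), .inl j => i = j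
  | .inr (.inr (.inl i)), .inl j => i = j
  | .inr (.inr (.inr (.inl _))), .inl j => j.val + 1 = n / 2 ∨ j.val = n / 2
  | .inr (.inr (.inr (.inl _))), .inr (.inr (.inr (.inr _))) => True
  | _, _ => False

/-- The caterpillar tree graph for the odd case. -/
def catGraphO (n : ℕ) : SimpleGraph (CatVO n) := SimpleGraph.fromRel (catRelO n)

/-- Edge weights for the odd caterpillar: spine edges weigh `2`, all edges
incident to `y` or `v_n` weigh `1`, and the edges to the leaves `u_i, v_i`
weigh `n`. -/
def catWO (n : ℕ) : CatVO n → CatVO n → ℝ := fun a b =>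
  match a, b with
  | .inl _, .inl _ => 2
  | .inr (.inr (.inr _)), _ => 1
  | _, .inr (.inr (.inr _)) => 1
  | _, _ => (n : ℝ)

/-- The assignment of the vertices of `C_n ⊠ P_2` (minus `u_n`) to the leaves
of the odd caterpillar. -/
def leafMapO (n : ℕ) : Fin n × Fin 2 → CatVO n := fun p =>
  if h : p.1.val < n - 1 then
    if p.2 = 0 then .inr (.inl ⟨p.1.val, h⟩) else .inr (.inr (.inl ⟨p.1.val, h⟩))
  else .inr (.inr (.inr (.inr ())))


/-! Every leaf hangs by a pendant edge from an internal node: `u_i` and `v_i` from `x_i` with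
weight `n`, and `v_n` from `y` with weight `1`. The internal nodes lie isometrically on a line,
`x_i` at coordinate `2i - 2` and `y` at `n - 2`; because `n` is odd, `y` sits exactly midway
between `x_{⌊n/2⌋}` and `x_{⌈n/2⌉}`, so the detour through `y` costs the same `2` as a spine edge.
Hence two distinct leaves hanging from `x_i` and `x_j` are at distance `2n + 2|i - j|`, and `v_n` is
at distance `n + 1 + |n - 2i|` from a leaf hanging from `x_i`. Such a distance lies in
`[2n - 2, 2n + 2]` exactly when `|i - j| ≤ 1`, respectively `i ∈ {1, n - 1}`: these are the
adjacencies of `C_n ⊠ P_2` without `u_n`. -/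

namespace SimpleGraph.Walk

variable {V β : Type*} {G : SimpleGraph V} [Preorder β] {f : V → β}

lemma le_of_mem_support_of_lt_darts {u v : V} (p : G.Walk u v)
    (hp : ∀ d ∈ p.darts, f d.fst < f d.snd) {a : V} (ha : a ∈ p.support) : f u ≤ f a := by
  induction p with
  | nil => simp_all
  | cons h q ih =>
    simp only [darts_cons, List.mem_cons, forall_eq_or_imp, support_cons] at hp ha
    rcases ha with rfl | ha
    · exact le_rfl
    · exact hp.1.le.trans (ih hp.2 ha)

lemma isPath_of_lt_darts {u v : V} (p : G.Walk u v) (hp : ∀ d ∈ p.darts, f d.fst < f d.snd) :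
    p.IsPath := by
  induction p with
  | nil => exact .nil
  | cons h q ih =>
    simp only [darts_cons, List.mem_cons, forall_eq_or_imp] at hp
    refine (cons_isPath_iff h q).2 ⟨ih hp.2, fun hu => ?_⟩
    exact (hp.1.trans_le (q.le_of_mem_support_of_lt_darts hp.2 hu)).false

end SimpleGraph.Walk

namespace WTree

variable {α : Type} (T : WTree α)

lemma dist_eq_of_isPath {u v : α} (p : T.g.Walk u v) (hp : p.IsPath) :
    T.dist u v = (p.darts.map fun d => T.w d.fst d.snd).sum := by
  rw [dist, (T.isTree.existsUnique_path u v).unique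
    (T.isTree.existsUnique_path u v).exists.choose_spec hp]

lemma dist_comm (u v : α) : T.dist u v = T.dist v u := by
  obtain ⟨p, hp, -⟩ := T.isTree.existsUnique_path u v
  rw [T.dist_eq_of_isPath p hp, T.dist_eq_of_isPath p.reverse hp.reverse,
    Walk.darts_reverse, List.map_reverse, List.sum_reverse, List.map_map]
  exact congrArg List.sum (List.map_congr_left fun d _ => T.w_symm _ _)

lemma dist_eq_of_isLeaf {v x w : α} (hv : T.IsLeaf v) (hx : T.g.Adj v x) (hvw : v ≠ w) :
    T.dist v w = T.w v x + T.dist x w := by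
  obtain ⟨p, hp, -⟩ := T.isTree.existsUnique_path v w
  cases p with
  | nil => exact absurd rfl hvw
  | cons h q =>
    obtain rfl := hv.unique h hx
    rw [T.dist_eq_of_isPath _ hp, T.dist_eq_of_isPath q ((Walk.cons_isPath_iff h q).1 hp).1]
    simp

/-- `u` and `v` are joined by a walk along which `pos` grows by the weight of each edge.
Since weights are positive, such a walk is the tree path, so `pos` measures distance along it. -/
def Straight (pos : α → ℝ) (u v : α) : Prop :=
  ∃ p : T.g.Walk u v, ∀ d ∈ p.darts, T.w d.fst d.snd = pos d.snd - pos d.fst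

variable {T} {pos : α → ℝ}

lemma Straight.refl (u : α) : T.Straight pos u u := ⟨.nil, by simp⟩

lemma Straight.of_adj {u v : α} (h : T.g.Adj u v) (hw : T.w u v = pos v - pos u) :
    T.Straight pos u v :=
  ⟨.cons h .nil, by simpa using hw⟩

lemma Straight.trans {u v w : α} (huv : T.Straight pos u v) (hvw : T.Straight pos v w) :
    T.Straight pos u w := by
  obtain ⟨p, hp⟩ := huv
  obtain ⟨q, hq⟩ := hvw
  refine ⟨p.append q, fun d hd => ?_⟩
  rw [Walk.darts_append, List.mem_append] at hd
  exact hd.elim (hp d) (hq d)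

lemma Straight.dist_eq {u v : α} (h : T.Straight pos u v) : T.dist u v = pos v - pos u := by
  obtain ⟨p, hp⟩ := h
  have hpath : p.IsPath := p.isPath_of_lt_darts (f := pos) fun d hd =>
    sub_pos.1 (hp d hd ▸ T.w_pos _ _ d.adj)
  rw [T.dist_eq_of_isPath p hpath]
  clear hpath
  induction p with
  | nil => simp
  | cons h q ih =>
    simp only [Walk.darts_cons, List.mem_cons, forall_eq_or_imp] at hp
    simp only [Walk.darts_cons, List.map_cons, List.sum_cons, ih hp.2, hp.1]
    ring

end WTree

lemma Nat.add_one_mod_eq_ite {n k : ℕ} (hk : k < n) :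
    (k + 1) % n = if k + 1 = n then 0 else k + 1 := by
  split_ifs with h
  · rw [h, Nat.mod_self]
  · exact Nat.mod_eq_of_lt (by omega)

namespace Caterpillar

abbrev y (n : ℕ) : CatVO n := .inr (.inr (.inr (.inl ())))

/-- The internal node from which the leaves `leafMapO n (i, _)` hang (`y` when `n - 1 ≤ i`). -/
def attach (n i : ℕ) : CatVO n := if h : i < n - 1 then .inl ⟨i, h⟩ else y n

/-- Coordinates of the internal nodes on the line they form; the value `0` on leaves is junk. -/
def pos (n : ℕ) : CatVO n → ℤ
  | .inl k => 2 * k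
  | .inr (.inr (.inr (.inl _))) => n - 2
  | _ => 0

def pendant (n i : ℕ) : ℤ := if i < n - 1 then n else 1

def leafDist (n i j : ℕ) : ℤ :=
  pendant n i + pendant n j + |pos n (attach n i) - pos n (attach n j)|

lemma attach_of_le {n i : ℕ} (h : n - 1 ≤ i) : attach n i = y n := dif_neg (by omega)

lemma pos_y (n : ℕ) : pos n (y n) = n - 2 := rfl

lemma pos_attach (n i : ℕ) : pos n (attach n i) = if i < n - 1 then 2 * (i : ℤ) else n - 2 := by
  unfold attach
  split_ifs <;> rfl

variable {n : ℕ} {T : WTree (CatVO n)}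

lemma adj_leafMapO_iff (hg : T.g = catGraphO n) (p : Fin n × Fin 2) (a : CatVO n) :
    T.g.Adj (leafMapO n p) a ↔ a = attach n p.1 := by
  rw [hg, catGraphO, fromRel_adj]
  unfold leafMapO attach
  split_ifs <;> rcases a with _ | _ | _ | _ | _ <;> simp [catRelO, *] <;> exact eq_comm

lemma adj_attach_succ (hg : T.g = catGraphO n) {j : ℕ} (hj : j + 1 < n - 1)
    (hgap : j + 1 ≠ n / 2) : T.g.Adj (attach n j) (attach n (j + 1)) := by
  rw [hg, catGraphO, fromRel_adj]
  simp [attach, hj, show j < n - 1 by omega, catRelO, hgap]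

lemma adj_attach_y (hg : T.g = catGraphO n) {j : ℕ} (hj : j < n - 1)
    (h : j + 1 = n / 2 ∨ j = n / 2) : T.g.Adj (attach n j) (y n) := by
  rw [hg, catGraphO, fromRel_adj]
  simp [attach, hj, catRelO, h]

lemma isLeaf_leafMapO (hg : T.g = catGraphO n) (p : Fin n × Fin 2) : T.IsLeaf (leafMapO n p) :=
  ⟨attach n p.1, (adj_leafMapO_iff hg p _).2 rfl, fun a ha => (adj_leafMapO_iff hg p a).1 ha⟩

lemma leafMapO_ne_attach (p : Fin n × Fin 2) (i : ℕ) : leafMapO n p ≠ attach n i := by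
  unfold leafMapO attach
  split_ifs <;> simp

lemma w_leafMapO (hw : T.w = catWO n) (p : Fin n × Fin 2) :
    T.w (leafMapO n p) (attach n p.1) = pendant n p.1 := by
  rw [hw]
  unfold leafMapO attach pendant
  split_ifs <;> simp [catWO]

lemma leafMapO_injOn {h : n - 1 < n} {p q : Fin n × Fin 2} (hp : p ≠ (⟨n - 1, h⟩, 0))
    (hq : q ≠ (⟨n - 1, h⟩, 0)) (hpq : leafMapO n p = leafMapO n q) : p = q := by
  obtain ⟨⟨i, hi⟩, s⟩ := p
  obtain ⟨⟨j, hj⟩, t⟩ := q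
  simp only [ne_eq, Prod.mk.injEq, Fin.ext_iff, not_and] at hp hq ⊢
  unfold leafMapO at hpq
  split_ifs at hpq <;> simp_all <;> omega

lemma not_isLeaf_inl (hg : T.g = catGraphO n) (k : Fin (n - 1)) : ¬ T.IsLeaf (.inl k) := by
  rintro ⟨a, -, ha⟩
  have hk : attach n k = .inl k := dif_pos k.2
  have h0 := ha _ ((adj_leafMapO_iff hg (⟨k, by omega⟩, 0) _).2 hk.symm).symm
  have h1 := ha _ ((adj_leafMapO_iff hg (⟨k, by omega⟩, 1) _).2 hk.symm).symm
  simp [← h1, leafMapO, k.2] at h0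

lemma not_isLeaf_y (hg : T.g = catGraphO n) (hn : 5 ≤ n) : ¬ T.IsLeaf (y n) := by
  rintro ⟨a, -, ha⟩
  have h0 := ha _
    ((adj_leafMapO_iff hg (⟨n - 1, by omega⟩, 1) _).2 (attach_of_le le_rfl).symm).symm
  have h1 := ha _ (adj_attach_y hg (j := n / 2) (by omega) (.inr rfl)).symm
  exact leafMapO_ne_attach _ _ (h0.trans h1.symm)

lemma exists_leafMapO_eq (hg : T.g = catGraphO n) (hn : 5 ≤ n) {h : n - 1 < n} {b : CatVO n}
    (hb : T.IsLeaf b) : ∃ p, p ≠ (⟨n - 1, h⟩, 0) ∧ leafMapO n p = b := by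
  rcases b with k | k | k | _ | _
  · exact absurd hb (not_isLeaf_inl hg k)
  · exact ⟨(⟨k, by omega⟩, 0), by simp [Fin.ext_iff]; omega, by simp [leafMapO, k.2]⟩
  · exact ⟨(⟨k, by omega⟩, 1), by simp, by simp [leafMapO, k.2]⟩
  · exact absurd hb (not_isLeaf_y hg hn)
  · exact ⟨(⟨n - 1, by omega⟩, 1), by simp, by simp [leafMapO]⟩

lemma w_attach_attach (hw : T.w = catWO n) {i j : ℕ} (hi : i < n - 1) (hj : j < n - 1) :
    T.w (attach n i) (attach n j) = 2 := by
  simp [hw, attach, hi, hj, catWO]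

lemma w_attach_y (hw : T.w = catWO n) {i : ℕ} (hi : i < n - 1) : T.w (attach n i) (y n) = 1 := by
  simp [hw, attach, hi, catWO]

lemma w_y_attach (hw : T.w = catWO n) (i : ℕ) : T.w (y n) (attach n i) = 1 := by
  simp [hw, catWO]

lemma straight_attach_succ (hg : T.g = catGraphO n) (hw : T.w = catWO n) (hodd : Odd n)
    {j : ℕ} (hj : j + 1 < n - 1) :
    T.Straight (fun a => (pos n a : ℝ)) (attach n j) (attach n (j + 1)) := by
  by_cases hgap : j + 1 = n / 2
  · have hc : (n : ℝ) = 2 * j + 3 := by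
      have := Nat.odd_iff.1 hodd
      exact_mod_cast (by omega : n = 2 * j + 3)
    refine (WTree.Straight.of_adj (adj_attach_y hg (by omega) (.inl hgap)) ?_).trans
      (WTree.Straight.of_adj (adj_attach_y hg hj (.inr hgap)).symm ?_)
    · rw [w_attach_y hw (by omega), pos_y, pos_attach, if_pos (by omega)]
      push_cast; linarith
    · rw [w_y_attach hw, pos_y, pos_attach, if_pos hj]
      push_cast; linarith
  · refine WTree.Straight.of_adj (adj_attach_succ hg hj hgap) ?_
    rw [w_attach_attach hw (by omega) hj, pos_attach, pos_attach, if_pos hj, if_pos (by omega)]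
    push_cast; ring

lemma straight_attach_of_le (hg : T.g = catGraphO n) (hw : T.w = catWO n) (hodd : Odd n)
    {i j : ℕ} (hij : i ≤ j) (hj : j < n - 1) :
    T.Straight (fun a => (pos n a : ℝ)) (attach n i) (attach n j) := by
  induction j, hij using Nat.le_induction with
  | base => exact .refl _
  | succ j _ ih => exact (ih (by omega)).trans (straight_attach_succ hg hw hodd hj)

lemma straight_attach_y (hg : T.g = catGraphO n) (hw : T.w = catWO n) (hodd : Odd n)
    {i : ℕ} (hi : i < n / 2) : T.Straight (fun a => (pos n a : ℝ)) (attach n i) (y n) := by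
  have h2 := Nat.odd_iff.1 hodd
  refine (straight_attach_of_le hg hw hodd (j := n / 2 - 1) (by omega) (by omega)).trans
    (WTree.Straight.of_adj (adj_attach_y hg (by omega) (.inl (by omega))) ?_)
  have hc : (n : ℝ) = 2 * (n / 2 - 1 : ℕ) + 3 := by
    exact_mod_cast (by omega : n = 2 * (n / 2 - 1) + 3)
  rw [w_attach_y hw (by omega), pos_y, pos_attach, if_pos (by omega)]
  push_cast; linarith

lemma straight_y_attach (hg : T.g = catGraphO n) (hw : T.w = catWO n) (hodd : Odd n)
    {j : ℕ} (hj : n / 2 ≤ j) (hj' : j < n - 1) :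
    T.Straight (fun a => (pos n a : ℝ)) (y n) (attach n j) := by
  have h2 := Nat.odd_iff.1 hodd
  refine (WTree.Straight.of_adj (adj_attach_y hg (by omega) (.inr rfl)).symm ?_).trans
    (straight_attach_of_le hg hw hodd hj hj')
  have hc : (n : ℝ) = 2 * (n / 2 : ℕ) + 1 := by exact_mod_cast (by omega : n = 2 * (n / 2) + 1)
  rw [w_y_attach hw, pos_y, pos_attach, if_pos (by omega)]
  push_cast [-Int.natCast_ediv]; linarith

lemma straight_attach_of_pos_le (hg : T.g = catGraphO n) (hw : T.w = catWO n) (hodd : Odd n)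
    {i j : ℕ} (h : pos n (attach n i) ≤ pos n (attach n j)) :
    T.Straight (fun a => (pos n a : ℝ)) (attach n i) (attach n j) := by
  have h2 := Nat.odd_iff.1 hodd
  rw [pos_attach, pos_attach] at h
  by_cases hi : i < n - 1 <;> by_cases hj : j < n - 1 <;> simp only [hi, hj, if_true, if_false] at h
  · exact straight_attach_of_le hg hw hodd (by omega) hj
  · rw [attach_of_le (by omega : n - 1 ≤ j)]
    exact straight_attach_y hg hw hodd (by omega)
  · rw [attach_of_le (by omega : n - 1 ≤ i)]
    exact straight_y_attach hg hw hodd (by omega) hj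
  · rw [attach_of_le (by omega : n - 1 ≤ i), attach_of_le (by omega : n - 1 ≤ j)]
    exact .refl _

lemma dist_attach (hg : T.g = catGraphO n) (hw : T.w = catWO n) (hodd : Odd n) (i j : ℕ) :
    T.dist (attach n i) (attach n j) = |pos n (attach n i) - pos n (attach n j)| := by
  rcases le_total (pos n (attach n i)) (pos n (attach n j)) with h | h
  · rw [(straight_attach_of_pos_le hg hw hodd h).dist_eq, abs_of_nonpos (by omega)]
    push_cast; ring
  · rw [T.dist_comm, (straight_attach_of_pos_le hg hw hodd h).dist_eq, abs_of_nonneg (by omega)]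
    push_cast; ring

lemma dist_leafMapO (hg : T.g = catGraphO n) (hw : T.w = catWO n) (hodd : Odd n)
    {p q : Fin n × Fin 2} (hpq : leafMapO n p ≠ leafMapO n q) :
    T.dist (leafMapO n p) (leafMapO n q) = leafDist n p.1 q.1 := by
  have hp : T.g.Adj (leafMapO n p) (attach n p.1) := (adj_leafMapO_iff hg p _).2 rfl
  have hq : T.g.Adj (leafMapO n q) (attach n q.1) := (adj_leafMapO_iff hg q _).2 rfl
  rw [T.dist_eq_of_isLeaf (isLeaf_leafMapO hg p) hp hpq, T.dist_comm,
    T.dist_eq_of_isLeaf (isLeaf_leafMapO hg q) hq (leafMapO_ne_attach q p.1),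
    w_leafMapO hw, w_leafMapO hw, dist_attach hg hw hodd, leafDist, abs_sub_comm]
  push_cast; ring

lemma strongProdC2_adj_iff (hn : 5 ≤ n) {h : n - 1 < n} {p q : Fin n × Fin 2} (hpq : p ≠ q)
    (hp : p ≠ (⟨n - 1, h⟩, 0)) (hq : q ≠ (⟨n - 1, h⟩, 0)) :
    (strongProdC2 n).Adj p q ↔
      2 * n - 2 ≤ leafDist n p.1 q.1 ∧ leafDist n p.1 q.1 ≤ 2 * n + 2 := by
  obtain ⟨⟨i, hi⟩, s⟩ := p
  obtain ⟨⟨j, hj⟩, t⟩ := q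
  simp only [strongProdC2, ne_eq, hpq, not_false_eq_true, true_and, Fin.ext_iff,
    Nat.add_one_mod_eq_ite hi, Nat.add_one_mod_eq_ite hj, leafDist, pendant, pos_attach]
  simp only [ne_eq, Prod.mk.injEq, Fin.ext_iff, not_and] at hp hq hpq
  split_ifs <;> rcases abs_cases ((_ : ℤ) - _) with ⟨habs, _⟩ | ⟨habs, _⟩ <;> rw [habs] <;> omega

end Caterpillar

open Caterpillar

theorem caterpillar_odd_pcg (n : ℕ) (hn : 5 ≤ n) (hodd : Odd n)
    (T : WTree (CatVO n)) (hg : T.g = catGraphO n) (hw : T.w = catWO n) :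
    IsPCGWith ((strongProdC2 n).induce {p | p ≠ ((⟨n - 1, by omega⟩ : Fin n), (0 : Fin 2))})
      T (fun p => leafMapO n p.1) (2 * (n : ℝ) - 2) (2 * (n : ℝ) + 2) := by
  refine ⟨fun p q h => Subtype.ext (leafMapO_injOn p.2 q.2 h),
    fun p => isLeaf_leafMapO hg p.1, fun b hb => ?_, fun p q hpq => ?_⟩
  · obtain ⟨p, hp, rfl⟩ := exists_leafMapO_eq hg hn hb
    exact ⟨⟨p, hp⟩, rfl⟩
  · have hne : p.1 ≠ q.1 := fun h => hpq (Subtype.ext h)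
    rw [dist_leafMapO hg hw hodd fun h => hne (leafMapO_injOn p.2 q.2 h)]
    exact_mod_cast strongProdC2_adj_iff hn hne p.2 q.2
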